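/- Let B = (b_0, ..., b_{n-1}) be a skew-symmetric binary sequence of odd length n, and let P = B || b_n for some b_n ∈ {-1,1}. Then E(P) = E(B) + n + 2 b_n δ, where δ = Σ_{u even, 0 ≤ u ≤ n-2} Ĉ_u(B) b_{u+1} and Ĉ_u(B) = C_{n-u-1}(B). -/

import Mathlib

open Finset

/-!
Appending `b_n` adds `b_{n-u} b_n` to each `C_u` with `1 ≤ u ≤ n` (where `C_n(B) = 0`), so
squaring gives `E(P) = E(B) + n + 2 b_n Σ_u C_u(B) b_{n-u}`. Reindexing by `u ↦ n - 1 - u` turns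
the cross sum into `Σ_v Ĉ_v(B) b_{v+1}`, and its terms with odd `v` vanish because `n - v - 1` is
then odd and a skew-symmetric sequence has zero aperiodic autocorrelation at every odd lag.
-/

section

variable {R : Type*} [CommRing R]

def autocorr (S : ℕ → R) (m u : ℕ) : R :=
  ∑ j ∈ range (m - u), S j * S (j + u)

def energy (S : ℕ → R) (m : ℕ) : R :=
  ∑ u ∈ Icc 1 (m - 1), autocorr S m u ^ 2

def IsSkewSymmetric (B : ℕ → R) (l : ℕ) : Prop :=
  ∀ i, 1 ≤ i → i ≤ l → B (l + i) = (-1) ^ i * B (l - i)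

@[simp]
theorem autocorr_self (S : ℕ → R) (m : ℕ) : autocorr S m m = 0 := by
  simp [autocorr]

theorem autocorr_succ_of_eqOn {B P : ℕ → R} {n u : ℕ} (hPB : ∀ j < n, P j = B j)
    (hu : 1 ≤ u) (hun : u ≤ n) :
    autocorr P (n + 1) u = autocorr B n u + B (n - u) * P n := by
  rw [autocorr, autocorr, Nat.sub_add_comm hun, sum_range_succ, Nat.sub_add_cancel hun,
    hPB (n - u) (by omega)]
  congr 1
  refine sum_congr rfl fun j hj => ?_
  rw [mem_range] at hj
  rw [hPB j (by omega), hPB (j + u) (by omega)]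

theorem IsSkewSymmetric.apply_eq_neg_one_pow_mul {B : ℕ → R} {l j : ℕ} (h : IsSkewSymmetric B l)
    (hj : j ≤ 2 * l) : B j = (-1) ^ (l + j) * B (2 * l - j) := by
  rcases le_total l j with hlj | hjl
  · obtain ⟨i, rfl⟩ := Nat.exists_eq_add_of_le hlj
    rw [show 2 * l - (l + i) = l - i by omega, ← add_assoc, pow_add, ← two_mul, pow_mul,
      neg_one_sq, one_pow, one_mul]
    rcases Nat.eq_zero_or_pos i with rfl | hi
    · simp
    · exact h i hi (by omega)
  · obtain ⟨i, hil, rfl⟩ : ∃ i ≤ l, j = l - i := ⟨l - j, by omega, by omega⟩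
    rw [show 2 * l - (l - i) = l + i by omega]
    rcases Nat.eq_zero_or_pos i with rfl | hi
    · simp [← two_mul, pow_mul]
    · rw [h i hi (by omega), ← mul_assoc, ← pow_add, Even.neg_one_pow ⟨l, by omega⟩, one_mul]

theorem IsSkewSymmetric.autocorr_eq_zero_of_odd {B : ℕ → R} {l u : ℕ} (h : IsSkewSymmetric B l)
    (hu : Odd u) : autocorr B (2 * l + 1) u = 0 := by
  -- the reflection `j ↦ 2l - u - j` pairs the terms of `C_u` with opposite signs
  refine sum_involution (fun j _ => 2 * l - u - j) (fun j hj => ?_) (fun j hj _ => ?_)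
    (fun j hj => ?_) (fun j hj => ?_) <;> rw [mem_range] at hj
  · rw [h.apply_eq_neg_one_pow_mul (j := j) (by omega),
      h.apply_eq_neg_one_pow_mul (j := j + u) (by omega),
      show 2 * l - (j + u) = 2 * l - u - j by omega, show 2 * l - u - j + u = 2 * l - j by omega]
    have hsign : (-1 : R) ^ (l + j) * (-1) ^ (l + (j + u)) = -1 := by
      rw [← pow_add, Odd.neg_one_pow]
      obtain ⟨k, rfl⟩ := hu
      exact ⟨l + j + k, by ring⟩
    linear_combination B (2 * l - j) * B (2 * l - u - j) * hsign
  · obtain ⟨k, rfl⟩ := hu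
    omega
  · rw [mem_range]
    omega
  · omega

theorem sum_Icc_one_sub_one_of_apply_eq_zero {M : Type*} [AddCommMonoid M] {f : ℕ → M} {n : ℕ}
    (hf : f n = 0) : ∑ u ∈ Icc 1 (n - 1), f u = ∑ u ∈ Icc 1 n, f u := by
  rcases n with _ | m
  · rfl
  · rw [sum_Icc_succ_top (by omega), hf, add_zero, Nat.add_sub_cancel]

theorem energy_append {B P : ℕ → R} {n : ℕ} (hB : ∀ j < n, B j ^ 2 = 1)
    (hPB : ∀ j < n, P j = B j) (hPn : P n ^ 2 = 1) :
    energy P (n + 1) =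
      energy B n + n + 2 * P n * ∑ u ∈ Icc 1 (n - 1), autocorr B n u * B (n - u) := by
  have hterm : ∀ u ∈ Icc 1 n, autocorr P (n + 1) u ^ 2 =
      autocorr B n u ^ 2 + 2 * P n * (autocorr B n u * B (n - u)) + 1 := by
    intro u hu
    rw [mem_Icc] at hu
    rw [autocorr_succ_of_eqOn hPB hu.1 hu.2]
    linear_combination P n ^ 2 * hB (n - u) (by omega) + hPn
  rw [energy, Nat.add_sub_cancel, sum_congr rfl hterm, sum_add_distrib, sum_add_distrib, ← mul_sum,
    sum_const, Nat.card_Icc, energy,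
    sum_Icc_one_sub_one_of_apply_eq_zero (f := fun u => autocorr B n u ^ 2) (by simp),
    sum_Icc_one_sub_one_of_apply_eq_zero (f := fun u => autocorr B n u * B (n - u)) (by simp)]
  simp only [add_tsub_cancel_right, nsmul_eq_mul, mul_one]
  ring

theorem sum_autocorr_mul_eq_sum_range (B : ℕ → R) (n : ℕ) :
    ∑ u ∈ Icc 1 (n - 1), autocorr B n u * B (n - u) =
      ∑ v ∈ range (n - 1), (∑ j ∈ range (v + 1), B j * B (j + (n - v - 1))) * B (v + 1) := by
  refine sum_nbij' (fun u => n - 1 - u) (fun v => n - 1 - v) ?_ ?_ ?_ ?_ ?_ <;>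
    intro u hu <;> simp only [mem_Icc, mem_range] at hu ⊢
  · omega
  · omega
  · omega
  · omega
  · rw [autocorr, show n - 1 - u + 1 = n - u by omega, show n - (n - 1 - u) - 1 = u by omega]

end

/-- Energy of the appended pseudo-skew-symmetric sequence `P = B || bn`:
`E(P) = E(B) + n + 2 bn δ` with `δ = Σ_{u even, 0 ≤ u ≤ n-2} Ĉ_u(B) b_{u+1}`. -/
theorem pseudoSkewSymmetric_append_energy_formula
    (l n : ℕ) (B : ℕ → ℤ) (bn : ℤ) (hn : n = 2 * l + 1)
    (hbin : ∀ j < n, B j = 1 ∨ B j = -1)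
    (hbn : bn = 1 ∨ bn = -1)
    (hskew : ∀ i, 1 ≤ i → i ≤ l → B (l + i) = (-1) ^ i * B (l - i))
    (P : ℕ → ℤ) (hP : ∀ j, P j = if j = n then bn else B j) :
    ∑ u ∈ Finset.Icc 1 n, (∑ j ∈ Finset.range (n + 1 - u), P j * P (j + u)) ^ 2 =
      (∑ u ∈ Finset.Icc 1 (n - 1), (∑ j ∈ Finset.range (n - u), B j * B (j + u)) ^ 2) +
        n + 2 * bn *
          ∑ u ∈ (Finset.range (n - 1)).filter (fun u => Even u),
            (∑ j ∈ Finset.range (u + 1), B j * B (j + (n - u - 1))) * B (u + 1) := by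
  have hB : ∀ j < n, B j ^ 2 = 1 := fun j hj => by rcases hbin j hj with h | h <;> simp [h]
  have hPB : ∀ j < n, P j = B j := fun j hj => by rw [hP, if_neg hj.ne]
  have hPn : P n = bn := by rw [hP, if_pos rfl]
  rw [sum_filter_of_ne fun v hv hne => ?_, ← sum_autocorr_mul_eq_sum_range, ← hPn]
  · exact energy_append hB hPB (by rcases hbn with h | h <;> simp [hPn, h])
  by_contra hv'
  obtain ⟨k, rfl⟩ := Nat.not_even_iff_odd.mp hv'
  rw [mem_range] at hv
  have hodd := IsSkewSymmetric.autocorr_eq_zero_of_odd hskew (u := n - (2 * k + 1) - 1)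
    ⟨l - k - 1, by omega⟩
  rw [← hn, autocorr, show n - (n - (2 * k + 1) - 1) = 2 * k + 1 + 1 by omega] at hodd
  rw [hodd, zero_mul] at hne
  exact hne rfl
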